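/- arXiv:2410.17818 — 2 statements merged into one kernel-verified Lean document; each statement's English description precedes it below -/
import Mathlib

section
/- A finitely generated cancelative commutative semigroup S is positive (i.e., m + n = 0 implies m = n = 0) if and only if there exists a semigroup homomorphism λ: S → ℕ such that λ(m) = 0 if and only if m = 0. -/
/-!
Present `M` as the image of `ℕ^ι` under `x ↦ ∑ xᵢ • gᵢ` for nonzero generators `gᵢ`. By
cancellation and positivity, the `ℚ`-span `W` of the differences `x - y` of relations
`∑ xᵢ • gᵢ = ∑ yᵢ • gᵢ` meets the nonnegative orthant only in `0`. Stiemke's transposition theorem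
(Farkas' lemma, via Gordan's) then yields a strictly positive vector orthogonal to `W`; after
clearing denominators its entries are positive integer weights `aᵢ`, and `x ↦ ∑ xᵢ * aᵢ`
descends to the required grading `M →+ ℕ`.
-/

open Finset

theorem exists_nonneg_sum_insert_smul {R M ι : Type*} [AddCommMonoid M] [Zero R] [Preorder R]
    [SMul R M] [DecidableEq ι] {s : Finset ι} {j : ι} (hj : j ∉ s) (v : ι → M) {c : ι → R}
    (hc : ∀ i ∈ s, 0 ≤ c i) {t : R} (ht : 0 ≤ t) :
    ∃ c' : ι → R, (∀ i ∈ insert j s, 0 ≤ c' i) ∧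
      ∑ i ∈ insert j s, c' i • v i = t • v j + ∑ i ∈ s, c i • v i := by
  refine ⟨Function.update c j t, fun i hi => ?_, ?_⟩
  · rcases eq_or_ne i j with rfl | hij
    · simpa using ht
    · simpa [Function.update_of_ne hij] using hc i (mem_of_mem_insert_of_ne hi hij)
  · rw [sum_insert hj, Function.update_self]
    congr 1
    exact sum_congr rfl fun i hi => by rw [Function.update_of_ne (ne_of_mem_of_not_mem hi hj)]

section TheoremsOfTheAlternative

variable {𝕜 V ι : Type*} [Field 𝕜] [LinearOrder 𝕜] [IsStrictOrderedRing 𝕜]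
  [AddCommGroup V] [Module 𝕜 V]

theorem farkas_alternative (s : Finset ι) (v : ι → V) (b : V) :
    (∃ c : ι → 𝕜, (∀ i ∈ s, 0 ≤ c i) ∧ ∑ i ∈ s, c i • v i = b) ∨
      ∃ f : Module.Dual 𝕜 V, (∀ i ∈ s, 0 ≤ f (v i)) ∧ f b < 0 := by
  classical
  induction s using Finset.induction_on generalizing v b with
  | empty =>
    by_cases hb : b = 0
    · exact Or.inl ⟨0, by simp, by simp [hb]⟩
    · obtain ⟨f, hf⟩ := Module.Projective.exists_dual_eq_one 𝕜 hb
      exact Or.inr ⟨-f, by simp, by simp [hf]⟩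
  | insert j s hj ih =>
    obtain ⟨c, hc, rfl⟩ | ⟨f, hf, hfb⟩ := ih v b
    · simpa using Or.inl (exists_nonneg_sum_insert_smul hj v hc le_rfl)
    rcases le_or_gt 0 (f (v j)) with hfj | hfj
    · exact Or.inr ⟨f, forall_mem_insert _ _ _ |>.2 ⟨hfj, hf⟩, hfb⟩
    -- `π` projects onto `ker f` along `v j`
    set π : V →ₗ[𝕜] V := LinearMap.id - (f (v j))⁻¹ • f.smulRight (v j) with hπ
    have hπ_apply (x : V) : π x = x - ((f (v j))⁻¹ * f x) • v j := by
      simp [hπ, mul_smul]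
    obtain ⟨c, hc, hcb⟩ | ⟨g, hg, hgb⟩ := ih (π ∘ v) (π b)
    · set y := ∑ i ∈ s, c i • v i
      set t := (f (v j))⁻¹ * f (b - y)
      have hπy : π (b - y) = 0 := by
        simp only [map_sub, y, map_sum, map_smul, ← hcb, Function.comp_apply, sub_self]
      have hby : b = t • v j + y := by
        rw [hπ_apply, sub_eq_zero] at hπy
        rw [← hπy, sub_add_cancel]
      have hfy : 0 ≤ f y := by
        simp only [y, map_sum, map_smul, smul_eq_mul]
        exact sum_nonneg fun i hi => mul_nonneg (hc i hi) (hf i hi)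
      have ht : 0 ≤ t := mul_nonneg_of_nonpos_of_nonpos (inv_nonpos.2 hfj.le)
        (by rw [map_sub]; linarith)
      exact Or.inl (hby ▸ exists_nonneg_sum_insert_smul hj v hc ht)
    · have hπj : π (v j) = 0 := by simp [hπ_apply, hfj.ne]
      exact Or.inr ⟨g ∘ₗ π, forall_mem_insert _ _ _ |>.2 ⟨by simp [hπj], hg⟩, hgb⟩

theorem exists_dual_forall_pos [Fintype ι] (u : ι → V)
    (hu : ∀ c : ι → 𝕜, 0 ≤ c → ∑ i, c i • u i = 0 → c = 0) :
    ∃ f : Module.Dual 𝕜 V, ∀ i, 0 < f (u i) := by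
  obtain ⟨c, hc, hcb⟩ | ⟨g, hg, hgb⟩ :=
    farkas_alternative (𝕜 := 𝕜) univ (fun i => (u i, (1 : 𝕜))) (0, 1)
  · have hc0 : c = 0 := hu c (fun i => hc i (mem_univ i)) <| by
      simpa [Prod.fst_sum] using congrArg Prod.fst hcb
    simpa [hc0, Prod.snd_sum] using congrArg Prod.snd hcb
  · refine ⟨g ∘ₗ LinearMap.inl 𝕜 V 𝕜, fun i => ?_⟩
    have hsplit : g (u i, 1) = g (u i, 0) + g (0, 1) := by
      rw [← map_add, Prod.mk_add_mk, add_zero, zero_add]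
    have := hg i (mem_univ i)
    simp only [LinearMap.comp_apply, LinearMap.inl_apply]
    linarith

theorem Submodule.exists_pos_dotProduct_eq_zero [Fintype ι] (W : Submodule 𝕜 (ι → 𝕜))
    (hW : ∀ c ∈ W, 0 ≤ c → c = 0) : ∃ a : ι → 𝕜, (∀ i, 0 < a i) ∧ ∀ c ∈ W, a ⬝ᵥ c = 0 := by
  classical
  obtain ⟨f, hf⟩ := exists_dual_forall_pos (fun i => W.mkQ fun j => if i = j then 1 else 0)
    fun c hc0 hc => by
      rw [← LinearMap.pi_apply_eq_sum_univ, mkQ_apply, Quotient.mk_eq_zero] at hc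
      exact hW c hc hc0
  refine ⟨_, hf, fun c hc => ?_⟩
  calc _ = (f ∘ₗ W.mkQ) c := by
        simp [LinearMap.pi_apply_eq_sum_univ (f ∘ₗ W.mkQ) c, dotProduct, mul_comm]
    _ = 0 := by simp [(Quotient.mk_eq_zero W).2 hc]

end TheoremsOfTheAlternative

theorem AddSubgroup.mem_span_rat_iff {V : Type*} [AddCommGroup V] [Module ℚ V]
    (Z : AddSubgroup V) {c : V} :
    c ∈ Submodule.span ℚ (Z : Set V) ↔ ∃ n : ℕ, 0 < n ∧ n • c ∈ Z := by
  refine ⟨fun hc => ?_, fun ⟨n, hn, hnc⟩ => ?_⟩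
  · induction hc using Submodule.span_induction with
    | mem x hx => exact ⟨1, one_pos, by simpa using hx⟩
    | zero => exact ⟨1, one_pos, by simp [Z.zero_mem]⟩
    | add x y _ _ hx hy =>
      obtain ⟨n, hn, hnx⟩ := hx
      obtain ⟨m, hm, hmy⟩ := hy
      refine ⟨n * m, Nat.mul_pos hn hm, ?_⟩
      rw [smul_add, mul_comm n m, mul_smul, mul_comm m n, mul_smul]
      exact Z.add_mem (Z.nsmul_mem hnx m) (Z.nsmul_mem hmy n)
    | smul q x _ hx =>
      obtain ⟨n, hn, hnx⟩ := hx
      refine ⟨q.den * n, Nat.mul_pos q.den_pos hn, ?_⟩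
      have : (q.den * n) • q • x = q.num • n • x := by
        rw [← Nat.cast_smul_eq_nsmul ℚ, ← Nat.cast_smul_eq_nsmul ℚ n, ← Int.cast_smul_eq_zsmul ℚ,
          smul_smul, smul_smul]
        congr 1
        push_cast
        rw [mul_comm (q.den : ℚ), mul_assoc, ← Rat.mul_den_eq_num]
        ring
      exact this ▸ Z.zsmul_mem hnx q.num
  · have : c = (n : ℚ)⁻¹ • n • c := by
      rw [← Nat.cast_smul_eq_nsmul ℚ, smul_smul, inv_mul_cancel₀ (by positivity), one_smul]
    exact this ▸ Submodule.smul_mem _ _ (Submodule.subset_span hnc)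


theorem Rat.exists_pos_mul_eq_natCast {ι : Type*} [Fintype ι] (q : ι → ℚ) (hq : 0 ≤ q) :
    ∃ N : ℚ, 0 < N ∧ ∃ a : ι → ℕ, ∀ i, (a i : ℚ) = N * q i := by
  have hdvd (i : ι) := dvd_prod_of_mem (fun j => (q j).den) (mem_univ i)
  choose m hm using hdvd
  refine ⟨∏ j, ((q j).den : ℚ), by positivity, fun i => m i * (q i).num.toNat, fun i => ?_⟩
  have hnum : (((q i).num.toNat : ℤ) : ℚ) = (q i).num :=
    congrArg _ (Int.toNat_of_nonneg (Rat.num_nonneg.2 (hq i)))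
  rw [← Nat.cast_prod, hm i]
  push_cast at hnum ⊢
  rw [hnum, ← Rat.mul_den_eq_num]
  ring

theorem AddMonoidHom.exists_comp_eq_of_surjective {A M N : Type*} [AddZeroClass A]
    [AddZeroClass M] [AddZeroClass N] (p : A →+ M) (hp : Function.Surjective p) (ψ : A →+ N)
    (h : ∀ x y, p x = p y → ψ x = ψ y) : ∃ l : M →+ N, l.comp p = ψ := by
  refine ⟨(AddCon.lift _ ψ h).comp (AddCon.quotientKerEquivOfSurjective p hp).symm.toAddMonoidHom,
    ?_⟩
  ext x
  have : (AddCon.quotientKerEquivOfSurjective p hp).symm (p x) = x :=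
    (AddEquiv.symm_apply_eq _).2 rfl
  simp only [AddMonoidHom.comp_apply, AddEquiv.coe_toAddMonoidHom, this]
  exact AddCon.lift_coe _ x

section Relations

variable {ι M : Type*}

def relationLattice [AddZeroClass M] (p : (ι → ℕ) →+ M) : AddSubgroup (ι → ℚ) where
  carrier := {v | ∃ x y, p x = p y ∧ v = (Nat.cast ∘ x : ι → ℚ) - Nat.cast ∘ y}
  add_mem' := by
    rintro _ _ ⟨x, y, hxy, rfl⟩ ⟨x', y', hxy', rfl⟩
    refine ⟨x + x', y + y', by rw [map_add, map_add, hxy, hxy'], ?_⟩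
    ext i
    simp only [Pi.add_apply, Pi.sub_apply, Function.comp_apply, Nat.cast_add]
    ring
  zero_mem' := ⟨0, 0, rfl, by simp⟩
  neg_mem' := by
    rintro _ ⟨x, y, hxy, rfl⟩
    exact ⟨y, x, hxy.symm, by simp⟩

theorem eq_zero_of_nonneg_of_mem_span_relationLattice [AddCancelCommMonoid M]
    {p : (ι → ℕ) →+ M} (hp : ∀ x, p x = 0 → x = 0) {c : ι → ℚ} (hc0 : 0 ≤ c)
    (hc : c ∈ Submodule.span ℚ (relationLattice p : Set (ι → ℚ))) : c = 0 := by
  obtain ⟨n, hn, x, y, hxy, hnc⟩ := (AddSubgroup.mem_span_rat_iff _).1 hc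
  have hnc_i (i : ι) : n * c i = x i - y i := by
    simpa [nsmul_eq_mul] using congrFun hnc i
  have hyx : y ≤ x := fun i => by
    have : (0 : ℚ) ≤ x i - y i := hnc_i i ▸ mul_nonneg (Nat.cast_nonneg n) (hc0 i)
    exact_mod_cast sub_nonneg.1 this
  obtain ⟨z, rfl⟩ := exists_add_of_le hyx
  have hz : z = 0 := hp z <| by
    rw [map_add] at hxy
    exact add_eq_left.1 hxy
  ext i
  have := hnc_i i
  simp only [hz, add_zero, sub_self] at this
  simpa [hn.ne'] using this


theorem sum_nsmul_eq_zero_iff [AddCommMonoid M] [Subsingleton (AddUnits M)] [Fintype ι]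
    {g : ι → M} (hg : ∀ i, g i ≠ 0) {x : ι → ℕ} : ∑ i, x i • g i = 0 ↔ x = 0 := by
  refine ⟨fun h => funext fun i => ?_, by rintro rfl; simp⟩
  by_contra hx
  exact hg i (IsAddUnit.of_nsmul_eq_zero (sum_eq_zero_iff.1 h i (mem_univ i)) hx).eq_zero

theorem exists_pos_weights [AddCancelCommMonoid M] [Fintype ι] (p : (ι → ℕ) →+ M)
    (hp : ∀ x, p x = 0 → x = 0) :
    ∃ a : ι → ℕ, (∀ i, a i ≠ 0) ∧ ∀ x y, p x = p y → ∑ i, x i • a i = ∑ i, y i • a i := by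
  obtain ⟨w, hw, hwW⟩ := Submodule.exists_pos_dotProduct_eq_zero _
    fun c hc hc0 => eq_zero_of_nonneg_of_mem_span_relationLattice hp hc0 hc
  obtain ⟨N, hN, a, ha⟩ := Rat.exists_pos_mul_eq_natCast w fun i => (hw i).le
  refine ⟨a, fun i => by exact_mod_cast (ha i ▸ mul_pos hN (hw i)).ne', fun x y hxy => ?_⟩
  have hxy' := hwW _ (Submodule.subset_span ⟨x, y, hxy, rfl⟩)
  rw [dotProduct_sub, sub_eq_zero] at hxy'
  have hcast (z : ι → ℕ) : ((∑ i, z i • a i : ℕ) : ℚ) = N * (w ⬝ᵥ (Nat.cast ∘ z)) := by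
    push_cast
    rw [dotProduct, mul_sum]
    exact sum_congr rfl fun i _ => by simp [ha]; ring
  exact_mod_cast (hcast x).trans (hxy' ▸ (hcast y).symm)

theorem exists_grading_of_closure_eq_top [AddCancelCommMonoid M] [Subsingleton (AddUnits M)]
    [Fintype ι] {g : ι → M} (hg : ∀ i, g i ≠ 0)
    (hgen : AddSubmonoid.closure (Set.range g) = ⊤) :
    ∃ l : M →+ ℕ, ∀ m, l m = 0 ↔ m = 0 := by
  set p := (Fintype.linearCombination ℕ g).toAddMonoidHom
  have hp (x : ι → ℕ) : p x = ∑ i, x i • g i := Fintype.linearCombination_apply ..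
  have hsurj : Function.Surjective p := fun m => by
    obtain ⟨x, hx⟩ :=
      AddSubmonoid.mem_closure_range_iff_of_fintype.1 (hgen ▸ AddSubmonoid.mem_top m)
    exact ⟨x, by rw [hp, hx]⟩
  obtain ⟨a, ha, hpa⟩ := exists_pos_weights p fun x hx => (sum_nsmul_eq_zero_iff hg).1 (hp x ▸ hx)
  obtain ⟨l, hl⟩ := p.exists_comp_eq_of_surjective hsurj
    (Fintype.linearCombination ℕ a).toAddMonoidHom (by simpa [Fintype.linearCombination_apply])
  refine ⟨l, fun m => ?_⟩
  obtain ⟨x, rfl⟩ := hsurj m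
  rw [← AddMonoidHom.comp_apply, hl, hp, LinearMap.toAddMonoidHom_coe,
    Fintype.linearCombination_apply, sum_nsmul_eq_zero_iff ha, sum_nsmul_eq_zero_iff hg]

end Relations

/-- A finitely generated cancelative commutative semigroup (with zero) `M`
is positive iff there is a semigroup homomorphism `λ : M → ℕ` with `λ m = 0 ↔ m = 0`. -/
theorem positive_iff_exists_grading
    (M : Type) [AddCancelCommMonoid M] (hFG : AddMonoid.FG M) :
    (∀ a b : M, a + b = 0 → a = 0 ∧ b = 0) ↔
      ∃ l : M →+ ℕ, ∀ m : M, l m = 0 ↔ m = 0 := by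
  classical
  refine ⟨fun hpos => ?_, fun ⟨l, hl⟩ a b hab => ?_⟩
  · have : Subsingleton (AddUnits M) :=
      Subsingleton.addUnits_of_isAddUnit fun _ ⟨u, hu⟩ => hu ▸ (hpos _ _ u.val_neg).1
    obtain ⟨S, hS⟩ := hFG.fg_top
    refine exists_grading_of_closure_eq_top (g := ((↑) : S.erase 0 → M))
      (fun m => (mem_erase.1 m.2).1) ?_
    rw [Subtype.range_coe, coe_erase, AddSubmonoid.closure_sdiff_singleton_zero, hS]
  · have : l a + l b = 0 := by rw [← map_add, hab, map_zero]
    exact ⟨(hl a).1 (by omega), (hl b).1 (by omega)⟩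
end

section
/- For a simplicial complex T on a finite set E with nonempty support E', one has χ̃(T∨) = (−1)^{#E'−1} χ̃(T), where χ̃(T) = Σ_{J∈T}(−1)^{#J−1}. -/
open Finset

variable {A : Type} [DecidableEq A]

/-- The support `E' = {e ∈ E | {e} ∈ T}` of a simplicial complex `T` on `E`. -/
def suppT (E : Finset A) (T : Finset (Finset A)) : Finset A :=
  E.filter (fun e => {e} ∈ T)

/-- The Alexander dual `T∨ = {J ⊆ E' | E' \ J ∉ T}`. -/
def alexDual (E : Finset A) (T : Finset (Finset A)) : Finset (Finset A) :=
  (suppT E T).powerset.filter (fun J => suppT E T \ J ∉ T)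

/-- The relative Alexander dual `T̄∨ = {L ⊆ E | E \ L ∉ T}`. -/
def relAlexDual (E : Finset A) (T : Finset (Finset A)) : Finset (Finset A) :=
  E.powerset.filter (fun L => E \ L ∉ T)

/-- Reduced Euler characteristic `χ̃(T) = ∑_{J ∈ T} (-1)^{#J - 1}`. -/
def chiC (T : Finset (Finset A)) : ℤ := ∑ J ∈ T, (-1) ^ (J.card + 1)

/-! Splitting the simplex on `E'` into `T∨` and its complement, the simplex contributes
`χ̃ = 0`, while `J ↦ E' \ J` identifies the complement of `T∨` with `T` and turns each sign
`(-1)^{#J-1}` into `-(-1)^{#E'-1} (-1)^{#K-1}`. -/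

theorem subset_suppT_of_mem {E J : Finset A} {T : Finset (Finset A)}
    (hTE : ∀ J ∈ T, J ⊆ E) (hT : ∀ J ∈ T, ∀ K ⊆ J, K ∈ T) (hJ : J ∈ T) :
    J ⊆ suppT E T := fun e he =>
  mem_filter.mpr ⟨hTE J hJ he, hT J hJ {e} (singleton_subset_iff.mpr he)⟩

theorem chiC_powerset_of_nonempty {α : Type} {S : Finset α} (hS : S.Nonempty) :
    chiC S.powerset = 0 := by
  simp only [chiC, pow_succ, ← sum_mul, sum_powerset_neg_one_pow_card_of_nonempty hS, zero_mul]

theorem chiC_filter_not {α : Type} (F : Finset (Finset α)) (p : Finset α → Prop)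
    [DecidablePred p] :
    chiC (F.filter (fun J => ¬ p J)) = chiC F - chiC (F.filter p) := by
  rw [chiC, chiC, chiC, ← sum_filter_add_sum_filter_not F p]
  ring

theorem sum_powerset_filter_sdiff_mem {M : Type*} [AddCommMonoid M] {S : Finset A}
    {F : Finset (Finset A)} (hF : ∀ K ∈ F, K ⊆ S) (f : Finset A → M) :
    ∑ J ∈ S.powerset.filter (fun J => S \ J ∈ F), f J = ∑ K ∈ F, f (S \ K) := by
  refine sum_nbij' (S \ ·) (S \ ·) (fun J hJ => (mem_filter.mp hJ).2) (fun K hK => ?_)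
    (fun J hJ => Finset.sdiff_sdiff_eq_self (mem_powerset.mp (mem_filter.mp hJ).1))
    (fun K hK => Finset.sdiff_sdiff_eq_self (hF K hK)) (fun J hJ => ?_)
  · rw [mem_filter, mem_powerset, Finset.sdiff_sdiff_eq_self (hF K hK)]
    exact ⟨sdiff_subset, hK⟩
  · rw [Finset.sdiff_sdiff_eq_self (mem_powerset.mp (mem_filter.mp hJ).1)]

theorem neg_one_pow_card_sdiff_succ {S K : Finset A} (hS : S.Nonempty) (hK : K ⊆ S) :
    (-1 : ℤ) ^ ((S \ K).card + 1) = -((-1) ^ (S.card - 1) * (-1) ^ (K.card + 1)) := by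
  have hk : K.card ≤ S.card := card_le_card hK
  have hn : 0 < S.card := hS.card_pos
  have hexp : S.card - 1 + (K.card + 1) + 1 = ((S \ K).card + 1) + 2 * K.card := by
    rw [card_sdiff_of_subset hK]
    omega
  rw [← pow_add, ← mul_neg_one ((-1 : ℤ) ^ _), ← pow_succ, hexp,
    pow_add _ _ (2 * K.card), pow_mul, neg_one_sq, one_pow, mul_one]

/-- For a simplicial complex `T` on `E` with nonempty support `E'`,
`χ̃(T∨) = (-1)^{#E' - 1} χ̃(T)`. -/
theorem chi_alexDual
    (E : Finset A) (T : Finset (Finset A))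
    (hTE : ∀ J ∈ T, J ⊆ E) (hT : ∀ J ∈ T, ∀ K ⊆ J, K ∈ T)
    (hsupp : (suppT E T).Nonempty) :
    chiC (alexDual E T) = (-1) ^ ((suppT E T).card - 1) * chiC T := by
  set E' := suppT E T
  have hsub : ∀ K ∈ T, K ⊆ E' := fun K hK => subset_suppT_of_mem hTE hT hK
  calc chiC (alexDual E T)
      = chiC E'.powerset - chiC (E'.powerset.filter (fun J => E' \ J ∈ T)) :=
        chiC_filter_not _ _
    _ = -∑ K ∈ T, (-1 : ℤ) ^ ((E' \ K).card + 1) := by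
        rw [chiC_powerset_of_nonempty hsupp, chiC, sum_powerset_filter_sdiff_mem hsub, zero_sub]
    _ = (-1) ^ (E'.card - 1) * chiC T := by
        rw [chiC, mul_sum, ← sum_neg_distrib]
        refine sum_congr rfl fun K hK => ?_
        rw [neg_one_pow_card_sdiff_succ hsupp (hsub K hK), neg_neg]
end
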